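/- Let φ be the standard G2 3-form on ℝ⁷ and for X ∈ ℝ⁷ let P_X be the skew-symmetric endomorphism of ℝ⁷ given by Y ↦ P(X,Y) (equivalently X ⌟ φ viewed as an endomorphism). Then the operator S = Σᵢ P_{eᵢ} ∘ P_{eᵢ} (sum over an orthonormal basis) acting on the space of trace-free symmetric 2-tensors Sym²₀ℝ⁷ (via the natural derivation action of skew endomorphisms A: (A·h)(X,Y) = −h(AX,Y) − h(X,AY)) equals −14 times the identity. -/

import Mathlib

open Matrix BigOperators

/-- The sign of a 7-tuple of indices (Levi-Civita symbol on 7 letters). -/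
noncomputable def eps7 (f : Fin 7 → Fin 7) : ℝ :=
  ∑ σ : Equiv.Perm (Fin 7), if (⇑σ = f) then ((Equiv.Perm.sign σ : ℤ) : ℝ) else 0

/-- Fully antisymmetric indicator of the triple `(a,b,c)`. -/
noncomputable def eps3 (a b c i j k : Fin 7) : ℝ :=
  ∑ σ : Equiv.Perm (Fin 3),
    if (![i, j, k] = ![a, b, c] ∘ ⇑σ) then ((Equiv.Perm.sign σ : ℤ) : ℝ) else 0

/-- The standard G2 associative 3-form on ℝ⁷ (components, 0-indexed), with the sign
convention for which `⋆(φ ∧ ω)` has eigenvalues `-2` and `1` on 2-forms. -/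
noncomputable def g2phi (i j k : Fin 7) : ℝ :=
  -(eps3 0 1 2 i j k + eps3 0 3 4 i j k + eps3 0 5 6 i j k + eps3 1 3 5 i j k
    - eps3 1 4 6 i j k - eps3 2 3 6 i j k - eps3 2 4 5 i j k)

/-! For a skew matrix `A` the derivation action is `h ↦ ⁅A, h⁆`, so the operator is the Casimir
sum `Σᵢ ⁅Pᵢ, ⁅Pᵢ, h⁆⁆ = (Σ Pᵢ²) h - 2 Σ Pᵢ h Pᵢ + h (Σ Pᵢ²)`, which does not depend on the
orthonormal basis. The contraction identities of `φ` give `Σ Pᵢ² = -6` and, for symmetric `h`,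
`Σ Pᵢ h Pᵢ = h - (tr h) 1`; hence the operator is `h ↦ -14 h + 2 (tr h) 1`. -/

attribute [local instance] LieRing.ofAssociativeRing LieAlgebra.ofAssociativeAlgebra

theorem sum_lie_lie_eq_of_orthonormal {ι R L M : Type*} [Fintype ι] [DecidableEq ι] [CommRing R]
    [LieRing L] [LieAlgebra R L] [AddCommGroup M] [Module R M] [LieRingModule L M]
    [LieModule R L M] (e : ι → ι → R) (he : ∀ i j, e i ⬝ᵥ e j = if i = j then 1 else 0)
    (x : ι → L) (m : M) :
    ∑ i, ⁅∑ p, e i p • x p, ⁅∑ p, e i p • x p, m⁆⁆ = ∑ p, ⁅x p, ⁅x p, m⁆⁆ := by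
  have hcol : ∀ p q, ∑ i, e i p * e i q = if p = q then 1 else 0 := by
    have hrow : Matrix.of e * (Matrix.of e)ᵀ = 1 := by
      ext i j
      simpa [Matrix.mul_apply, Matrix.one_apply, dotProduct] using he i j
    have hcol' : (Matrix.of e)ᵀ * Matrix.of e = 1 := mul_eq_one_comm.mp hrow
    intro p q
    simpa [Matrix.mul_apply, Matrix.one_apply] using congrFun₂ hcol' p q
  calc ∑ i, ⁅∑ p, e i p • x p, ⁅∑ p, e i p • x p, m⁆⁆
      = ∑ i, ∑ q, ∑ p, (e i q * e i p) • ⁅x p, ⁅x q, m⁆⁆ := by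
        simp only [sum_lie, lie_sum, smul_lie, lie_smul, Finset.smul_sum, smul_smul]
    _ = ∑ q, ∑ p, (∑ i, e i q * e i p) • ⁅x p, ⁅x q, m⁆⁆ := by
        simp only [Finset.sum_smul]
        rw [Finset.sum_comm]
        exact Finset.sum_congr rfl fun p _ => Finset.sum_comm
    _ = ∑ p, ⁅x p, ⁅x p, m⁆⁆ := by simp [hcol]

theorem Ring.lie_lie_eq {A : Type*} [Ring A] (a h : A) :
    ⁅a, ⁅a, h⁆⁆ = a * a * h - 2 • (a * h * a) + h * (a * a) := by
  simp only [Ring.lie_def]; noncomm_ring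

-- Integer copies of `eps3` and `g2phi` that the kernel can evaluate; the table memoizes
-- `g2phiInt`, which keeps the `decide` proofs of the contraction identities fast.
def eps3Int (a b c i j k : Fin 7) : ℤ :=
  ∑ σ : Equiv.Perm (Fin 3), if ![i, j, k] = ![a, b, c] ∘ ⇑σ then (Equiv.Perm.sign σ : ℤ) else 0

def g2phiInt (i j k : Fin 7) : ℤ :=
  -(eps3Int 0 1 2 i j k + eps3Int 0 3 4 i j k + eps3Int 0 5 6 i j k + eps3Int 1 3 5 i j k
    - eps3Int 1 4 6 i j k - eps3Int 2 3 6 i j k - eps3Int 2 4 5 i j k)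

def g2phiTable : Fin 7 → Fin 7 → Fin 7 → ℤ :=
![
  ![![0, 0, 0, 0, 0, 0, 0], ![0, 0, -1, 0, 0, 0, 0], ![0, 1, 0, 0, 0, 0, 0], ![0, 0, 0, 0, -1, 0, 0], ![0, 0, 0, 1, 0, 0, 0], ![0, 0, 0, 0, 0, 0, -1], ![0, 0, 0, 0, 0, 1, 0]],
  ![![0, 0, 1, 0, 0, 0, 0], ![0, 0, 0, 0, 0, 0, 0], ![-1, 0, 0, 0, 0, 0, 0], ![0, 0, 0, 0, 0, -1, 0], ![0, 0, 0, 0, 0, 0, 1], ![0, 0, 0, 1, 0, 0, 0], ![0, 0, 0, 0, -1, 0, 0]],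
  ![![0, -1, 0, 0, 0, 0, 0], ![1, 0, 0, 0, 0, 0, 0], ![0, 0, 0, 0, 0, 0, 0], ![0, 0, 0, 0, 0, 0, 1], ![0, 0, 0, 0, 0, 1, 0], ![0, 0, 0, 0, -1, 0, 0], ![0, 0, 0, -1, 0, 0, 0]],
  ![![0, 0, 0, 0, 1, 0, 0], ![0, 0, 0, 0, 0, 1, 0], ![0, 0, 0, 0, 0, 0, -1], ![0, 0, 0, 0, 0, 0, 0], ![-1, 0, 0, 0, 0, 0, 0], ![0, -1, 0, 0, 0, 0, 0], ![0, 0, 1, 0, 0, 0, 0]],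
  ![![0, 0, 0, -1, 0, 0, 0], ![0, 0, 0, 0, 0, 0, -1], ![0, 0, 0, 0, 0, -1, 0], ![1, 0, 0, 0, 0, 0, 0], ![0, 0, 0, 0, 0, 0, 0], ![0, 0, 1, 0, 0, 0, 0], ![0, 1, 0, 0, 0, 0, 0]],
  ![![0, 0, 0, 0, 0, 0, 1], ![0, 0, 0, -1, 0, 0, 0], ![0, 0, 0, 0, 1, 0, 0], ![0, 1, 0, 0, 0, 0, 0], ![0, 0, -1, 0, 0, 0, 0], ![0, 0, 0, 0, 0, 0, 0], ![-1, 0, 0, 0, 0, 0, 0]],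
  ![![0, 0, 0, 0, 0, -1, 0], ![0, 0, 0, 0, 1, 0, 0], ![0, 0, 0, 1, 0, 0, 0], ![0, 0, -1, 0, 0, 0, 0], ![0, -1, 0, 0, 0, 0, 0], ![1, 0, 0, 0, 0, 0, 0], ![0, 0, 0, 0, 0, 0, 0]]]

theorem eps3_eq_cast (a b c i j k : Fin 7) : eps3 a b c i j k = eps3Int a b c i j k := by
  rw [eps3, eps3Int]
  push_cast [apply_ite (Int.cast : ℤ → ℝ)]
  rfl

set_option maxRecDepth 100000 in
theorem g2phi_eq_table (i j k : Fin 7) : g2phi i j k = g2phiTable i j k := by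
  have hInt : ∀ i j k, g2phiInt i j k = g2phiTable i j k := by decide
  rw [← hInt, g2phi, g2phiInt]
  push_cast [eps3_eq_cast]
  ring

set_option maxRecDepth 100000 in
theorem g2phi_swap (i j k : Fin 7) : g2phi i k j = -g2phi i j k := by
  have hInt : ∀ i j k, g2phiTable i k j = -g2phiTable i j k := by decide
  simp only [g2phi_eq_table]
  exact_mod_cast hInt i j k

set_option maxRecDepth 100000 in
theorem sum_g2phi_mul_g2phi (k l : Fin 7) :
    ∑ p, ∑ j, g2phi p k j * g2phi p l j = if k = l then 6 else 0 := by
  have hInt : ∀ k l : Fin 7, ∑ p, ∑ j, g2phiTable p k j * g2phiTable p l j =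
      if k = l then 6 else 0 := by decide
  simp only [g2phi_eq_table]
  exact_mod_cast hInt k l

set_option maxRecDepth 100000 in
theorem sum_g2phi_mul_g2phi_add_swap (a b k l : Fin 7) :
    ∑ p, (g2phi p a k * g2phi p l b + g2phi p b k * g2phi p l a) =
      (if a = l ∧ b = k then 1 else 0) + (if a = k ∧ b = l then 1 else 0) -
        (if a = b ∧ k = l then 2 else 0) := by
  have hInt : ∀ a b k l : Fin 7,
      ∑ p, (g2phiTable p a k * g2phiTable p l b + g2phiTable p b k * g2phiTable p l a) =
        (if a = l ∧ b = k then 1 else 0) + (if a = k ∧ b = l then 1 else 0) -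
          (if a = b ∧ k = l then 2 else 0) := by decide
  simp only [g2phi_eq_table]
  exact_mod_cast hInt a b k l

noncomputable def crossMat (p : Fin 7) : Matrix (Fin 7) (Fin 7) ℝ :=
  Matrix.of fun k j => g2phi p j k

theorem crossMat_transpose (p : Fin 7) : (crossMat p)ᵀ = -crossMat p := by
  ext k j
  exact g2phi_swap p j k

theorem sum_crossMat_mul_self : ∑ p, crossMat p * crossMat p = (-6 : ℝ) • 1 := by
  ext k l
  simp only [Matrix.sum_apply, Matrix.mul_apply, crossMat, Matrix.of_apply, g2phi_swap _ k,
    neg_mul, Finset.sum_neg_distrib, sum_g2phi_mul_g2phi, Matrix.smul_apply, Matrix.one_apply]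
  split_ifs <;> norm_num

theorem sum_crossMat_mul_mul_crossMat {h : Matrix (Fin 7) (Fin 7) ℝ} (hh : hᵀ = h) :
    ∑ p, crossMat p * h * crossMat p = h - Matrix.trace h • 1 := by
  have hsymm : ∀ a b, h b a = h a b := fun a b => by rw [← Matrix.transpose_apply h a b, hh]
  ext k l
  set T : Fin 7 → Fin 7 → ℝ := fun a b => ∑ p, g2phi p a k * g2phi p l b
  have hentry : (∑ p, crossMat p * h * crossMat p) k l = ∑ a, ∑ b, h a b * T a b := by
    simp only [Matrix.sum_apply, Matrix.mul_apply, crossMat, Matrix.of_apply, T, Finset.mul_sum,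
      Finset.sum_mul]
    conv_lhs => enter [2, p]; rw [Finset.sum_comm]
    rw [Finset.sum_comm]
    refine Finset.sum_congr rfl fun a _ => ?_
    rw [Finset.sum_comm]
    exact Finset.sum_congr rfl fun b _ => Finset.sum_congr rfl fun p _ => by ring
  -- By the symmetry of `h` only the symmetrization of `T` matters, and the contraction
  -- identity evaluates it.
  have hswap : ∑ a, ∑ b, h a b * T a b = ∑ a, ∑ b, h a b * T b a := by
    rw [Finset.sum_comm]
    simp only [hsymm]
  have hsymmetrized : ∑ a, ∑ b, h a b * (T a b + T b a) = 2 * (h - Matrix.trace h • 1) k l := by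
    simp only [T, ← Finset.sum_add_distrib, sum_g2phi_mul_g2phi_add_swap]
    simp only [mul_add, mul_sub, Finset.sum_add_distrib, Finset.sum_sub_distrib, mul_ite,
      mul_zero, mul_one, ite_and, Finset.sum_ite_irrel, Finset.sum_const_zero, Finset.sum_ite_eq,
      Finset.sum_ite_eq', Finset.mem_univ, if_true, Matrix.sub_apply, Matrix.smul_apply,
      Matrix.one_apply, Matrix.trace, Matrix.diag_apply, hsymm l k]
    split_ifs
    · rw [← Finset.sum_mul]; simp; ring
    · simp; ring
  have hsplit : ∑ a, ∑ b, h a b * (T a b + T b a) =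
      ∑ a, ∑ b, h a b * T a b + ∑ a, ∑ b, h a b * T b a := by
    simp only [mul_add, Finset.sum_add_distrib]
  linarith

theorem sum_lie_crossMat_lie_crossMat {h : Matrix (Fin 7) (Fin 7) ℝ} (hh : hᵀ = h) :
    ∑ p, ⁅crossMat p, ⁅crossMat p, h⁆⁆ = (-14 : ℝ) • h + (2 * Matrix.trace h) • 1 := by
  simp only [Ring.lie_lie_eq, Finset.sum_add_distrib, Finset.sum_sub_distrib,
    ← Finset.sum_mul, ← Finset.mul_sum, ← Finset.smul_sum, sum_crossMat_mul_self,
    sum_crossMat_mul_mul_crossMat hh, smul_mul_assoc, mul_smul_comm, one_mul, mul_one]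
  module

theorem transpose_sum_smul_crossMat (v : Fin 7 → ℝ) :
    (∑ p, v p • crossMat p)ᵀ = -∑ p, v p • crossMat p := by
  simp [Matrix.transpose_sum, crossMat_transpose]

/-- For the cross product `P` of the standard G2 3-form, the operator
`S = Σᵢ P_{eᵢ} ∘ P_{eᵢ}` (sum over an orthonormal basis, with skew endomorphisms acting
on symmetric 2-tensors as derivations, `(A·h)(X,Y) = -h(AX,Y) - h(X,AY)`) equals `-14`
times the identity on trace-free symmetric 2-tensors. -/
theorem stmt3
    (act : Matrix (Fin 7) (Fin 7) ℝ → Matrix (Fin 7) (Fin 7) ℝ → Matrix (Fin 7) (Fin 7) ℝ)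
    (hact : ∀ A h, act A h = -(Aᵀ * h) - h * A)
    (Pm : (Fin 7 → ℝ) → Matrix (Fin 7) (Fin 7) ℝ)
    (hPm : ∀ v k j, Pm v k j = ∑ i, v i * g2phi i j k)
    (e : Fin 7 → (Fin 7 → ℝ))
    (he : ∀ i j, e i ⬝ᵥ e j = if i = j then (1 : ℝ) else 0)
    (h : Matrix (Fin 7) (Fin 7) ℝ)
    (hsym : hᵀ = h) (htr : Matrix.trace h = 0) :
    ∑ i, act (Pm (e i)) (act (Pm (e i)) h) = (-14 : ℝ) • h := by
  have hPm_eq : ∀ v, Pm v = ∑ p, v p • crossMat p := fun v => by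
    ext k j
    simp [hPm, crossMat, Matrix.sum_apply]
  have hact_eq : ∀ v g, act (Pm v) g = ⁅Pm v, g⁆ := fun v g => by
    rw [hact, hPm_eq, transpose_sum_smul_crossMat, Ring.lie_def, neg_mul, neg_neg]
  calc ∑ i, act (Pm (e i)) (act (Pm (e i)) h)
      = ∑ i, ⁅∑ p, e i p • crossMat p, ⁅∑ p, e i p • crossMat p, h⁆⁆ := by
        simp only [hact_eq, ← hPm_eq]
    _ = ∑ p, ⁅crossMat p, ⁅crossMat p, h⁆⁆ := sum_lie_lie_eq_of_orthonormal e he crossMat h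
    _ = (-14 : ℝ) • h := by rw [sum_lie_crossMat_lie_crossMat hsym, htr]; simp
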